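/- Let π be a representation of a C*-algebra A on a Hilbert space H such that π(A) has a cyclic set of m vectors. If the single-vector-cyclic case satisfies LD_{12}, then π has the local distance property LD_{12m}: specifically, for any bounded map φ between C*-algebras one has ‖φ ⊗ id_{M_m}‖ ≤ m‖φ‖, and combining this with the cyclic-vector estimate d(y ⊗ I_m, π(A)′ ⊗ I_m) ≤ 12‖ad(y ⊗ I_m)|_{π(A)⊗M_m}‖ yields d(y, π(A)′) ≤ 12m‖ad(y)|_{π(A)}‖ for all y ∈ B(H). -/

import Mathlib

/-- The near inclusion `A ⊆_γ B`: every element of the closed unit ball of `A` lies within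
distance `γ` of some element of `B`. -/
def nearIncl {E : Type*} [NormedRing E] (A B : Set E) (γ : ℝ) : Prop :=
  ∀ x ∈ A, ‖x‖ ≤ 1 → ∃ y ∈ B, ‖x - y‖ ≤ γ

/-- The Kadison–Kastler distance between two subsets of a C*-algebra: the infimum of all
`γ > 0` such that each element of the unit ball of either set is within `γ` of an element
of the unit ball of the other. -/
noncomputable def kkDist {E : Type*} [NormedRing E] (A B : Set E) : ℝ :=
  sInf {γ : ℝ | 0 < γ ∧
    (∀ x ∈ A, ‖x‖ ≤ 1 → ∃ y ∈ B, ‖y‖ ≤ 1 ∧ ‖x - y‖ < γ) ∧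
    (∀ y ∈ B, ‖y‖ ≤ 1 → ∃ x ∈ A, ‖x‖ ≤ 1 ∧ ‖y - x‖ < γ)}

/-- The commutant of a set of bounded operators on a Hilbert space. -/
noncomputable def commutant {H : Type*} [NormedAddCommGroup H] [InnerProductSpace ℂ H]
    [CompleteSpace H] (S : Set (H →L[ℂ] H)) : Set (H →L[ℂ] H) :=
  {x | ∀ a ∈ S, a * x = x * a}

/-- `adNorm S x` is `‖ad(x)|_S‖`, the norm of the derivation `a ↦ xa - ax` restricted to `S`. -/
noncomputable def adNorm {H : Type*} [NormedAddCommGroup H] [InnerProductSpace ℂ H]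
    [CompleteSpace H] (S : Set (H →L[ℂ] H)) (x : H →L[ℂ] H) : ℝ :=
  sSup {r : ℝ | ∃ a ∈ S, ‖a‖ ≤ 1 ∧ r = ‖x * a - a * x‖}


/-!
On `H^m = ℓ²(Fin m, H)` the amplified algebra `π(A) ⊗ M_m` has the single cyclic vector
`(ξ_1, …, ξ_m)`: its matrix units carry `π(a) ξ_i` into any coordinate. Apply `LD_12` there to
`y ⊗ 1`. The diagonal corner `c_jj` of an element `c` of `(π(A) ⊗ M_m)'` lies in `π(A)'` and
`‖y - c_jj‖ ≤ ‖y ⊗ 1 - c‖`, so `d(y, π(A)') ≤ d(y ⊗ 1, (π(A) ⊗ M_m)')`. On the other side,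
`ad(y ⊗ 1)` acts entrywise on operator matrices, every entry of a contraction is a contraction,
and by Cauchy–Schwarz an `m × m` operator matrix with entries of norm `≤ C` has norm `≤ m C`;
hence `‖ad(y ⊗ 1)|_{π(A) ⊗ M_m}‖ ≤ m ‖ad(y)|_{π(A)}‖`.
-/

namespace PiLp

variable (p : ENNReal) {𝕜 : Type*} [NontriviallyNormedField 𝕜] {ι : Type*} [DecidableEq ι]
  {E : Type*} [NormedAddCommGroup E] [NormedSpace 𝕜 E]

def singleL (j : ι) : E →L[𝕜] PiLp p (fun _ : ι => E) :=
  (PiLp.continuousLinearEquiv p 𝕜 _).symm.toContinuousLinearMap ∘L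
    ContinuousLinearMap.single 𝕜 (fun _ : ι => E) j

def opEntry (c : PiLp p (fun _ : ι => E) →L[𝕜] PiLp p (fun _ : ι => E)) (j k : ι) :
    E →L[𝕜] E :=
  PiLp.proj p (β := fun _ : ι => E) j ∘L c ∘L singleL p k

lemma opEntry_apply (c : PiLp p (fun _ : ι => E) →L[𝕜] PiLp p (fun _ : ι => E)) (j k : ι)
    (w : E) : opEntry p c j k w = c (PiLp.single p k w) j := rfl

variable [Fintype ι]

lemma univ_sum_single (v : PiLp p fun _ : ι => E) : ∑ j, PiLp.single p j (v j) = v := by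
  simp only [PiLp.single, ← WithLp.toLp_sum, Finset.univ_sum_single, WithLp.toLp_ofLp]

lemma dense_submodule_of_forall_single_mem {D : Set E} (hD : Dense (Submodule.span 𝕜 D : Set E))
    (W : Submodule 𝕜 (PiLp p fun _ : ι => E)) (h : ∀ j, ∀ w ∈ D, PiLp.single p j w ∈ W) :
    Dense (W : Set (PiLp p fun _ : ι => E)) := by
  have hspan (j : ι) : Submodule.span 𝕜 D ≤ W.comap (singleL p j).toLinearMap :=
    Submodule.span_le.2 (h j)
  have hpi : Dense (WithLp.ofLp ⁻¹' Set.univ.pi fun _ : ι => (Submodule.span 𝕜 D : Set E) :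
      Set (PiLp p fun _ : ι => E)) :=
    (dense_pi _ fun _ _ => hD).preimage
      (PiLp.continuousLinearEquiv p 𝕜 _).toHomeomorph.isOpenMap
  refine hpi.mono fun v hv => ?_
  rw [← univ_sum_single p v]
  exact W.sum_mem fun j _ => hspan j (hv j trivial)

variable [Fact (1 ≤ p)]

lemma opEntry_sub (c d : PiLp p (fun _ : ι => E) →L[𝕜] PiLp p (fun _ : ι => E)) (j k : ι) :
    opEntry p (c - d) j k = opEntry p c j k - opEntry p d j k := rfl

lemma norm_opEntry_le (c : PiLp p (fun _ : ι => E) →L[𝕜] PiLp p (fun _ : ι => E)) (j k : ι) :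
    ‖opEntry p c j k‖ ≤ ‖c‖ := by
  refine ContinuousLinearMap.opNorm_le_bound _ (norm_nonneg c) fun w => ?_
  calc ‖opEntry p c j k w‖ ≤ ‖c (PiLp.single p k w)‖ := PiLp.norm_apply_le _ j
    _ ≤ ‖c‖ * ‖w‖ := by simpa only [PiLp.norm_single] using c.le_opNorm (PiLp.single p k w)

end PiLp

namespace Matrix

variable {ι : Type*} [Fintype ι] {H : Type*} [NormedAddCommGroup H] [InnerProductSpace ℂ H]

def toPiL2CLM (M : Matrix ι ι (H →L[ℂ] H)) :
    PiLp 2 (fun _ : ι => H) →L[ℂ] PiLp 2 (fun _ : ι => H) :=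
  (PiLp.continuousLinearEquiv 2 ℂ _).symm.toContinuousLinearMap ∘L
    ContinuousLinearMap.pi fun j => ∑ k, M j k ∘L PiLp.proj 2 (β := fun _ : ι => H) k

@[simp]
lemma toPiL2CLM_apply (M : Matrix ι ι (H →L[ℂ] H)) (v : PiLp 2 fun _ : ι => H) (j : ι) :
    toPiL2CLM M v j = ∑ k, M j k (v k) := by
  simp [toPiL2CLM]

variable [DecidableEq ι]

lemma toPiL2CLM_diagonal_apply (d : ι → H →L[ℂ] H) (v : PiLp 2 fun _ : ι => H) (j : ι) :
    toPiL2CLM (diagonal d) v j = d j (v j) := by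
  rw [toPiL2CLM_apply, Fintype.sum_eq_single j fun k hk => by simp [diagonal_apply_ne _ hk.symm],
    diagonal_apply_eq]

variable [CompleteSpace H]

variable (ι H) in
def toPiL2 :
    Matrix ι ι (H →L[ℂ] H) →⋆ₐ[ℂ] (PiLp 2 (fun _ : ι => H) →L[ℂ] PiLp 2 (fun _ : ι => H)) where
  toFun := toPiL2CLM
  map_one' := by
    ext v j
    rw [← diagonal_one, toPiL2CLM_diagonal_apply]
    rfl
  map_mul' M N := by
    ext v j
    simp only [toPiL2CLM_apply, mul_apply, mul_apply_eq_comp, map_sum,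
      FunLike.coe_sum, Finset.sum_apply]
    exact Finset.sum_comm
  map_zero' := by ext v j; simp
  map_add' M N := by ext v j; simp [Finset.sum_add_distrib]
  commutes' c := by
    ext v j
    rw [algebraMap_eq_diagonal, toPiL2CLM_diagonal_apply]
    rfl
  map_star' M := by
    refine (ContinuousLinearMap.eq_adjoint_iff _ _).2 fun v w => ?_
    simp only [PiLp.inner_apply, toPiL2CLM_apply, sum_inner, inner_sum, star_apply]
    rw [Finset.sum_comm]
    simp [ContinuousLinearMap.star_eq_adjoint, ContinuousLinearMap.adjoint_inner_left]

lemma toPiL2_apply (M : Matrix ι ι (H →L[ℂ] H)) (v : PiLp 2 fun _ : ι => H) (j : ι) :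
    toPiL2 ι H M v j = ∑ k, M j k (v k) :=
  toPiL2CLM_apply M v j

lemma toPiL2_diagonal_apply (d : ι → H →L[ℂ] H) (v : PiLp 2 fun _ : ι => H) (j : ι) :
    toPiL2 ι H (diagonal d) v j = d j (v j) :=
  toPiL2CLM_diagonal_apply d v j

lemma toPiL2_single_apply (j k : ι) (b : H →L[ℂ] H) (v : PiLp 2 fun _ : ι => H) :
    toPiL2 ι H (single j k b) v = PiLp.single 2 j (b (v k)) := by
  ext i
  rw [toPiL2_apply, Fintype.sum_eq_single k fun l hl => by
    simp [single_apply_of_col_ne _ _ (Ne.symm hl)]]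
  by_cases hij : i = j
  · subst hij
    simp
  · simp [single_apply_of_row_ne (Ne.symm hij), hij]

lemma opEntry_toPiL2 (M : Matrix ι ι (H →L[ℂ] H)) (j k : ι) :
    PiLp.opEntry 2 (toPiL2 ι H M) j k = M j k := by
  ext w
  rw [PiLp.opEntry_apply, toPiL2_apply, Fintype.sum_eq_single k fun l hl => by simp [hl]]
  simp

lemma opEntry_toPiL2_diagonal_mul (d : ι → H →L[ℂ] H)
    (c : PiLp 2 (fun _ : ι => H) →L[ℂ] PiLp 2 (fun _ : ι => H)) (j k : ι) :
    PiLp.opEntry 2 (toPiL2 ι H (diagonal d) * c) j k = d j * PiLp.opEntry 2 c j k := by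
  ext w
  exact toPiL2_diagonal_apply d _ j

lemma opEntry_mul_toPiL2_diagonal (d : ι → H →L[ℂ] H)
    (c : PiLp 2 (fun _ : ι => H) →L[ℂ] PiLp 2 (fun _ : ι => H)) (j k : ι) :
    PiLp.opEntry 2 (c * toPiL2 ι H (diagonal d)) j k = PiLp.opEntry 2 c j k * d k := by
  have hsingle : ∀ w, toPiL2 ι H (diagonal d) (PiLp.single 2 k w) = PiLp.single 2 k (d k w) := by
    intro w
    ext i
    rw [toPiL2_diagonal_apply]
    by_cases hik : i = k
    · subst hik
      simp
    · simp [hik]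
  ext w
  simp only [mul_apply_eq_comp, PiLp.opEntry_apply, hsingle]

lemma norm_toPiL2_le {M : Matrix ι ι (H →L[ℂ] H)} {C : ℝ} (hC0 : 0 ≤ C)
    (hC : ∀ j k, ‖M j k‖ ≤ C) : ‖toPiL2 ι H M‖ ≤ Fintype.card ι * C := by
  refine ContinuousLinearMap.opNorm_le_bound _ (by positivity) fun v => ?_
  have hrow : ∀ j, ‖toPiL2 ι H M v j‖ ^ 2 ≤ Fintype.card ι * C ^ 2 * ‖v‖ ^ 2 := by
    intro j
    calc ‖toPiL2 ι H M v j‖ ^ 2 ≤ (∑ k, C * ‖v k‖) ^ 2 := by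
          rw [toPiL2_apply]
          gcongr
          refine (norm_sum_le _ _).trans (Finset.sum_le_sum fun k _ => ?_)
          exact (M j k).le_of_opNorm_le (hC j k) _
      _ = C ^ 2 * (∑ k, ‖v k‖) ^ 2 := by rw [← Finset.mul_sum]; ring
      _ ≤ C ^ 2 * (Fintype.card ι * ∑ k, ‖v k‖ ^ 2) := by
          gcongr
          exact sq_sum_le_card_mul_sum_sq
      _ = Fintype.card ι * C ^ 2 * ‖v‖ ^ 2 := by rw [PiLp.norm_sq_eq_of_L2]; ring
  have hsq : ‖toPiL2 ι H M v‖ ^ 2 ≤ (Fintype.card ι * C * ‖v‖) ^ 2 := by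
    calc ‖toPiL2 ι H M v‖ ^ 2 = ∑ j, ‖toPiL2 ι H M v j‖ ^ 2 := PiLp.norm_sq_eq_of_L2 _ _
      _ ≤ ∑ _j : ι, Fintype.card ι * C ^ 2 * ‖v‖ ^ 2 := Finset.sum_le_sum fun j _ => hrow j
      _ = (Fintype.card ι * C * ‖v‖) ^ 2 := by
        rw [Finset.sum_const, Finset.card_univ, nsmul_eq_mul]; ring
  exact le_of_pow_le_pow_left₀ two_ne_zero (by positivity) hsq

end Matrix

section adNorm

variable {H : Type*} [NormedAddCommGroup H] [InnerProductSpace ℂ H] [CompleteSpace H]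

lemma adNorm_nonneg (S : Set (H →L[ℂ] H)) (x : H →L[ℂ] H) : 0 ≤ adNorm S x :=
  Real.sSup_nonneg (by rintro _ ⟨a, -, -, rfl⟩; exact norm_nonneg _)

lemma norm_commutator_le_adNorm {S : Set (H →L[ℂ] H)} {x a : H →L[ℂ] H} (ha : a ∈ S)
    (ha1 : ‖a‖ ≤ 1) : ‖x * a - a * x‖ ≤ adNorm S x := by
  refine le_csSup ⟨2 * ‖x‖, ?_⟩ ⟨a, ha, ha1, rfl⟩
  rintro _ ⟨b, -, hb1, rfl⟩
  calc ‖x * b - b * x‖ ≤ ‖x‖ * ‖b‖ + ‖b‖ * ‖x‖ :=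
        (norm_sub_le _ _).trans (add_le_add (norm_mul_le _ _) (norm_mul_le _ _))
    _ ≤ 2 * ‖x‖ := by nlinarith [norm_nonneg x, norm_nonneg b]

lemma adNorm_le {S : Set (H →L[ℂ] H)} {x : H →L[ℂ] H} {C : ℝ} (hC : 0 ≤ C)
    (h : ∀ a ∈ S, ‖a‖ ≤ 1 → ‖x * a - a * x‖ ≤ C) : adNorm S x ≤ C :=
  Real.sSup_le (by rintro _ ⟨a, ha, ha1, rfl⟩; exact h a ha ha1) hC

end adNorm

def StarAlgHom.mapMatrix {R α β : Type*} [CommSemiring R] [Semiring α] [Semiring β] [Algebra R α]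
    [Algebra R β] [Star α] [Star β] {ι : Type*} [Fintype ι] [DecidableEq ι] (f : α →⋆ₐ[R] β) :
    Matrix ι ι α →⋆ₐ[R] Matrix ι ι β where
  __ := f.toAlgHom.mapMatrix
  map_star' M := by ext; simp [Matrix.star_apply, map_star]

section ampliation

open Matrix

variable {A : Type*} [Semiring A] [Algebra ℂ A] [StarRing A]
  {H : Type*} [NormedAddCommGroup H] [InnerProductSpace ℂ H] [CompleteSpace H]
  {ι : Type*} [Fintype ι] [DecidableEq ι]

variable (ι) in
/-- The ampliation `π ⊗ id_{M_ι}` of a representation, acting on `H^ι`. -/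
noncomputable def StarAlgHom.ampliation (π : A →⋆ₐ[ℂ] (H →L[ℂ] H)) :
    Matrix ι ι A →⋆ₐ[ℂ] (PiLp 2 (fun _ : ι => H) →L[ℂ] PiLp 2 (fun _ : ι => H)) :=
  (toPiL2 ι H).comp π.mapMatrix

lemma StarAlgHom.ampliation_apply (π : A →⋆ₐ[ℂ] (H →L[ℂ] H)) (M : Matrix ι ι A) :
    π.ampliation ι M = toPiL2 ι H (M.map π) := rfl

lemma infDist_commutant_le_infDist_commutant_ampliation (π : A →⋆ₐ[ℂ] (H →L[ℂ] H)) (j : ι)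
    (y : H →L[ℂ] H) :
    Metric.infDist y (commutant (Set.range π)) ≤
      Metric.infDist (toPiL2 ι H (diagonal fun _ => y))
        (commutant (Set.range (π.ampliation ι))) := by
  have hne : (commutant (Set.range (π.ampliation ι))).Nonempty := ⟨1, fun a _ => by simp⟩
  refine (Metric.le_infDist hne).2 fun c hc => ?_
  have hcorner : PiLp.opEntry 2 c j j ∈ commutant (Set.range π) := by
    rintro _ ⟨b, rfl⟩
    have h := congrArg (fun T => PiLp.opEntry 2 T j j)
      (hc _ ⟨diagonal fun _ => b, rfl⟩)
    simpa [StarAlgHom.ampliation_apply, opEntry_toPiL2_diagonal_mul,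
      opEntry_mul_toPiL2_diagonal] using h
  calc Metric.infDist y (commutant (Set.range π)) ≤ dist y (PiLp.opEntry 2 c j j) :=
        Metric.infDist_le_dist_of_mem hcorner
    _ = ‖PiLp.opEntry 2 (toPiL2 ι H (diagonal fun _ => y) - c) j j‖ := by
        rw [dist_eq_norm, PiLp.opEntry_sub, opEntry_toPiL2, diagonal_apply_eq]
    _ ≤ dist (toPiL2 ι H (diagonal fun _ => y)) c := by
        rw [dist_eq_norm]
        exact PiLp.norm_opEntry_le _ _ _ _

lemma adNorm_ampliation_le (π : A →⋆ₐ[ℂ] (H →L[ℂ] H)) (y : H →L[ℂ] H) :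
    adNorm (Set.range (π.ampliation ι)) (toPiL2 ι H (diagonal fun _ => y)) ≤
      Fintype.card ι * adNorm (Set.range π) y := by
  refine adNorm_le (by positivity [adNorm_nonneg (Set.range π) y]) ?_
  rintro _ ⟨M, rfl⟩ hM1
  rw [StarAlgHom.ampliation_apply, ← map_mul, ← map_mul, ← map_sub]
  refine norm_toPiL2_le (adNorm_nonneg _ _) fun j k => ?_
  rw [Matrix.sub_apply, diagonal_mul, mul_diagonal]
  refine norm_commutator_le_adNorm ⟨M j k, rfl⟩ ?_
  rw [← opEntry_toPiL2 (M.map π)]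
  exact (PiLp.norm_opEntry_le _ _ _ _).trans hM1

lemma dense_span_ampliation_apply (π : A →⋆ₐ[ℂ] (H →L[ℂ] H)) (ξ : ι → H)
    (hcyc : Dense (Submodule.span ℂ {v : H | ∃ (a : A) (i : ι), v = π a (ξ i)} : Set H)) :
    Dense (Submodule.span ℂ {v | ∃ T ∈ NonUnitalStarAlgHom.range (π.ampliation ι),
      v = T (WithLp.toLp 2 ξ)} : Set (PiLp 2 fun _ : ι => H)) := by
  refine PiLp.dense_submodule_of_forall_single_mem 2 hcyc _ ?_
  rintro j _ ⟨a, i, rfl⟩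
  refine Submodule.subset_span ⟨_, NonUnitalStarAlgHom.mem_range_self _ (single j i a), ?_⟩
  rw [StarAlgHom.ampliation_apply, map_single, toPiL2_single_apply]

end ampliation

theorem LD_of_m_cyclic.{u, v} {A : Type u} [NormedRing A] [StarRing A] [CStarRing A]
    [NormedAlgebra ℂ A] [StarModule ℂ A] [CompleteSpace A]
    {H : Type v} [NormedAddCommGroup H] [InnerProductSpace ℂ H] [CompleteSpace H]
    (π : A →⋆ₐ[ℂ] (H →L[ℂ] H)) (m : ℕ) (hm : 0 < m) (ξ : Fin m → H)
    (hcyc : Dense (Submodule.span ℂ {v : H | ∃ (a : A) (i : Fin m), v = π a (ξ i)} : Set H))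
    (h12 : ∀ (K : Type v) [NormedAddCommGroup K] [InnerProductSpace ℂ K] [CompleteSpace K]
      (S : NonUnitalStarSubalgebra ℂ (K →L[ℂ] K)) (ξ0 : K),
      Dense (Submodule.span ℂ {v : K | ∃ a ∈ S, v = a ξ0} : Set K) →
      ∀ y : K →L[ℂ] K, Metric.infDist y (commutant (S : Set (K →L[ℂ] K))) ≤
        12 * adNorm (S : Set (K →L[ℂ] K)) y) :
    ∀ y : H →L[ℂ] H, Metric.infDist y (commutant (Set.range (⇑π))) ≤
      (12 * m) * adNorm (Set.range (⇑π)) y := by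
  intro y
  calc Metric.infDist y (commutant (Set.range π))
      ≤ Metric.infDist (Matrix.toPiL2 (Fin m) H (Matrix.diagonal fun _ => y))
          (commutant (Set.range (π.ampliation (Fin m)))) :=
        infDist_commutant_le_infDist_commutant_ampliation π (⟨0, hm⟩ : Fin m) y
    _ ≤ 12 * adNorm (Set.range (π.ampliation (Fin m)))
          (Matrix.toPiL2 (Fin m) H (Matrix.diagonal fun _ => y)) := by
        simpa only [NonUnitalStarAlgHom.coe_range] using
          h12 _ (NonUnitalStarAlgHom.range (π.ampliation (Fin m))) _
            (dense_span_ampliation_apply π ξ hcyc) _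
    _ ≤ 12 * (m * adNorm (Set.range π) y) := by
        gcongr
        simpa only [Fintype.card_fin] using adNorm_ampliation_le (ι := Fin m) π y
    _ = 12 * m * adNorm (Set.range π) y := by ring
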